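/- Let Ω be a finite set of players, G ≤ S_Ω a group of permutations, X = {(i,R) : i ∈ R ⊆ Ω} and χ = {R : ∅ ≠ R ⊆ Ω}, with G acting on X by g·(i,R) = (g·i, g·R) and on χ by g·R = g(R). Then the dimension of the affine space 𝒜_G of all G-symmetric quasi-values on Ω equals |X/G| − |χ/G|, the number of G-orbits of X minus the number of G-orbits of χ. -/

import Mathlib

/-!
The unanimity games `u_R` (`R ∈ χ`) form a basis of the games, so a linear value `ψ` is determined
by the payoff vectors `ψ(u_R)`, and the null-player property, efficiency and `G`-symmetry may be
tested on this basis: `ψ(u_R)` is supported on `R`, sums to `1`, and `ψ(u_{gR})_{g i} = ψ(u_R)_i`.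
Hence the direction of `𝒜_G` is isomorphic to the space of functions `q` on `X/G` whose coalition
sums `∑_{i ∈ R} q[(i, R)]` vanish. The coalition-sum map `ℝ^{X/G} → ℝ^{χ/G}` is onto (share `r[R]`
equally among the members of `R`), so its kernel has dimension `|X/G| - |χ/G|`; a preimage of the
constant `1` is a point of `𝒜_G`.
-/

open scoped BigOperators

/-- The space of cooperative games on player set `Ω`: real-valued functions on
coalitions vanishing on the empty coalition. -/
def GameSpace (Ω : Type*) [DecidableEq Ω] : Submodule ℝ (Finset Ω → ℝ) where
  carrier := {v | v ∅ = 0}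
  add_mem' := by
    intro a b ha hb
    simp only [Set.mem_setOf_eq, Pi.add_apply] at *
    simp [ha, hb]
  zero_mem' := rfl
  smul_mem' := by
    intro c v hv
    simp only [Set.mem_setOf_eq, Pi.smul_apply] at *
    simp [hv]

/-- A (linear) game value: a linear operator from games to payoff vectors. -/
abbrev GameValue (Ω : Type*) [DecidableEq Ω] := GameSpace Ω →ₗ[ℝ] (Ω → ℝ)

/-- Player `i` is a null player of the game `v`: `v(R ∪ {i}) = v(R)` for all `R`. -/
def IsNullPlayer {Ω : Type*} [DecidableEq Ω] (i : Ω) (v : GameSpace Ω) : Prop :=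
  ∀ R : Finset Ω, (v : Finset Ω → ℝ) (insert i R) = (v : Finset Ω → ℝ) R

/-- A quasi-value: a linear game value satisfying the null-player property and
efficiency. -/
def IsQuasiValue {Ω : Type*} [Fintype Ω] [DecidableEq Ω] (φ : GameValue Ω) : Prop :=
  (∀ (v : GameSpace Ω) (i : Ω), IsNullPlayer i v → φ v i = 0) ∧
  (∀ v : GameSpace Ω, ∑ i, φ v i = (v : Finset Ω → ℝ) Finset.univ)

/-- The action of a permutation on a game: `(g • v)(R) = v(g⁻¹(R))`. -/
def permGame {Ω : Type*} [DecidableEq Ω] (g : Equiv.Perm Ω) (v : GameSpace Ω) :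
    GameSpace Ω :=
  ⟨fun R => (v : Finset Ω → ℝ) (R.image (g⁻¹ : Equiv.Perm Ω)), by
    show (v : Finset Ω → ℝ) ((∅ : Finset Ω).image (g⁻¹ : Equiv.Perm Ω)) = 0
    rw [Finset.image_empty]
    exact v.2⟩

/-- `φ` is symmetric with respect to all permutations in `G`:
`φ(g • v) = g • φ(v)`, i.e. `φ(g • v)ᵢ = φ(v)_{g⁻¹ i}` for all `g ∈ G`. -/
def IsGSym {Ω : Type*} [DecidableEq Ω] (G : Subgroup (Equiv.Perm Ω))
    (φ : GameValue Ω) : Prop :=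
  ∀ g ∈ G, ∀ (v : GameSpace Ω) (i : Ω), φ (permGame g v) i = φ v (g⁻¹ i)

/-- The unanimity game `u_R` for a nonempty coalition `R`. -/
def unanimity {Ω : Type*} [DecidableEq Ω] (R : Finset Ω) (hR : R.Nonempty) :
    GameSpace Ω :=
  ⟨fun S => if R ⊆ S then (1 : ℝ) else 0, by
    show (if R ⊆ (∅ : Finset Ω) then (1 : ℝ) else 0) = 0
    simp [Finset.subset_empty, hR.ne_empty]⟩

/-- Orbit equivalence of the action `g • R = g(R)` of `G` on the set
`χ = {R : ∅ ≠ R ⊆ Ω}` of nonempty coalitions. -/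
def chiSetoid {Ω : Type*} [DecidableEq Ω] (G : Subgroup (Equiv.Perm Ω)) :
    Setoid {R : Finset Ω // R.Nonempty} where
  r A B := ∃ g ∈ G, A.1.image g = B.1
  iseqv := by
    refine ⟨fun A => ⟨1, one_mem G, by simp⟩, ?_, ?_⟩
    · rintro A B ⟨g, hg, h⟩
      refine ⟨g⁻¹, inv_mem hg, ?_⟩
      rw [← h, Finset.image_image]
      have hcomp : (⇑g⁻¹ ∘ ⇑g) = id := by funext x; simp
      rw [hcomp, Finset.image_id]
    · rintro A B C ⟨g, hg, h1⟩ ⟨g', hg', h2⟩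
      refine ⟨g' * g, mul_mem hg' hg, ?_⟩
      rw [← h2, ← h1, Finset.image_image]
      rfl

/-- Orbit equivalence of the action `g • (i, R) = (g i, g(R))` of `G` on the set
`X = {(i, R) : i ∈ R ⊆ Ω}`. -/
def pairSetoid {Ω : Type*} [DecidableEq Ω] (G : Subgroup (Equiv.Perm Ω)) :
    Setoid {p : Ω × Finset Ω // p.1 ∈ p.2} where
  r x y := ∃ g ∈ G, g x.1.1 = y.1.1 ∧ x.1.2.image g = y.1.2
  iseqv := by
    refine ⟨fun x => ⟨1, one_mem G, by simp, by simp⟩, ?_, ?_⟩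
    · rintro x y ⟨g, hg, h1, h2⟩
      refine ⟨g⁻¹, inv_mem hg, by rw [← h1]; simp, ?_⟩
      rw [← h2, Finset.image_image]
      have hcomp : (⇑g⁻¹ ∘ ⇑g) = id := by funext x; simp
      rw [hcomp, Finset.image_id]
    · rintro x y z ⟨g, hg, h1, h2⟩ ⟨g', hg', h3, h4⟩
      refine ⟨g' * g, mul_mem hg' hg, by rw [← h3, ← h1]; rfl, ?_⟩
      rw [← h4, ← h2, Finset.image_image]
      rfl

abbrev NonemptyCoalition (Ω : Type*) := {R : Finset Ω // R.Nonempty}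

section UnanimityBasis

variable {Ω : Type*} [DecidableEq Ω]

@[simp]
lemma unanimity_apply (R : Finset Ω) (hR : R.Nonempty) (S : Finset Ω) :
    (unanimity R hR : Finset Ω → ℝ) S = if R ⊆ S then 1 else 0 :=
  rfl

variable [Fintype Ω]

/-- Evaluating a vanishing combination at a coalition `R` of minimal size with a nonzero
coefficient isolates that coefficient. -/
lemma linearIndependent_unanimity :
    LinearIndependent ℝ fun R : NonemptyCoalition Ω => unanimity R.1 R.2 := by
  rw [Fintype.linearIndependent_iff]
  intro c hc
  by_contra! hne
  obtain ⟨R, hR, hmin⟩ := (Finset.univ.filter fun R => c R ≠ 0).exists_min_image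
    (fun R => R.1.card) (by simpa [Finset.filter_nonempty_iff] using hne)
  have hsum := congrArg (fun v : GameSpace Ω => (v : Finset Ω → ℝ) R.1) hc
  simp only [Submodule.coe_sum, Finset.sum_apply, Submodule.coe_smul, Pi.smul_apply,
    unanimity_apply, smul_eq_mul, mul_ite, mul_one, mul_zero, ZeroMemClass.coe_zero,
    Pi.zero_apply] at hsum
  rw [Finset.sum_eq_single R] at hsum
  · simp_all
  · intro S _ hSR
    split_ifs with hS
    · by_contra hcS
      have := hmin S (by simpa using hcS)
      exact hSR (Subtype.ext (Finset.eq_of_subset_of_card_le hS this))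
    · rfl
  · simp

lemma finrank_gameSpace_le :
    Module.finrank ℝ (GameSpace Ω) ≤ Fintype.card (NonemptyCoalition Ω) := by
  let restrict : GameSpace Ω →ₗ[ℝ] (NonemptyCoalition Ω → ℝ) :=
    { toFun := fun v R => (v : Finset Ω → ℝ) R.1
      map_add' := fun _ _ => rfl
      map_smul' := fun _ _ => rfl }
  have hinj : Function.Injective restrict := by
    intro v w hvw
    ext S
    obtain rfl | hS := S.eq_empty_or_nonempty
    · exact v.2.trans w.2.symm
    · exact congrFun hvw ⟨S, hS⟩
  simpa using LinearMap.finrank_le_finrank_of_injective hinj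

noncomputable def unanimityBasis (Ω : Type*) [DecidableEq Ω] [Fintype Ω] :
    Module.Basis (NonemptyCoalition Ω) ℝ (GameSpace Ω) :=
  basisOfLinearIndependentOfCardEqFinrank' _ linearIndependent_unanimity
    (le_antisymm linearIndependent_unanimity.fintype_card_le_finrank finrank_gameSpace_le)

@[simp]
lemma unanimityBasis_apply (R : NonemptyCoalition Ω) :
    unanimityBasis Ω R = unanimity R.1 R.2 := by
  simp [unanimityBasis]

end UnanimityBasis

section Comap

variable {Ω : Type*} [DecidableEq Ω]

def gameComap (f : Finset Ω → Finset Ω) (hf : f ∅ = ∅) : GameSpace Ω →ₗ[ℝ] GameSpace Ω where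
  toFun v := ⟨fun S => (v : Finset Ω → ℝ) (f S), by
    show (v : Finset Ω → ℝ) (f ∅) = 0
    rw [hf]
    exact v.2⟩
  map_add' _ _ := rfl
  map_smul' _ _ := rfl

@[simp]
lemma gameComap_apply (f : Finset Ω → Finset Ω) (hf : f ∅ = ∅) (v : GameSpace Ω) (S : Finset Ω) :
    (gameComap f hf v : Finset Ω → ℝ) S = (v : Finset Ω → ℝ) (f S) :=
  rfl

lemma permGame_eq_gameComap (g : Equiv.Perm Ω) (v : GameSpace Ω) :
    permGame g v = gameComap (·.image (g⁻¹ : Equiv.Perm Ω)) (Finset.image_empty _) v :=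
  rfl

lemma permGame_unanimity (g : Equiv.Perm Ω) (R : Finset Ω) (hR : R.Nonempty) :
    permGame g (unanimity R hR) = unanimity (R.image g) (hR.image g) := by
  ext S
  simp [permGame_eq_gameComap, Finset.subset_iff, Equiv.symm_apply_eq]

def eraseGame (i : Ω) : GameSpace Ω →ₗ[ℝ] GameSpace Ω :=
  gameComap (·.erase i) (Finset.erase_empty i)

lemma eraseGame_unanimity (i : Ω) (R : Finset Ω) (hR : R.Nonempty) :
    eraseGame i (unanimity R hR) = if i ∈ R then 0 else unanimity R hR := by
  ext S
  split_ifs with hi <;> simp [eraseGame, Finset.subset_erase, hi]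

lemma eraseGame_eq_self {i : Ω} {v : GameSpace Ω} (hv : IsNullPlayer i v) : eraseGame i v = v := by
  ext S
  by_cases hi : i ∈ S
  · rw [eraseGame, gameComap_apply, ← hv, Finset.insert_erase hi]
  · rw [eraseGame, gameComap_apply, Finset.erase_eq_of_notMem hi]

lemma isNullPlayer_unanimity {i : Ω} {R : Finset Ω} (hR : R.Nonempty) (hi : i ∉ R) :
    IsNullPlayer i (unanimity R hR) := by
  intro S
  simp [Finset.subset_insert_iff_of_notMem hi]

end Comap

section UnanimityCriteria

variable {Ω : Type*} [Fintype Ω] [DecidableEq Ω] {ψ : GameValue Ω}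

lemma apply_eq_zero_of_isNullPlayer
    (hψ : ∀ R hR i, i ∉ R → ψ (unanimity R hR) i = 0) {v : GameSpace Ω} {i : Ω}
    (hv : IsNullPlayer i v) : ψ v i = 0 := by
  -- `eraseGame i` fixes `v` and kills every `u_R` with `i ∈ R`
  have h : (LinearMap.proj i).comp (ψ.comp (eraseGame i)) = 0 :=
    (unanimityBasis Ω).ext fun R => by
      by_cases hi : i ∈ R.1 <;> simp [eraseGame_unanimity, hi, hψ]
  simpa [eraseGame_eq_self hv] using LinearMap.congr_fun h v

lemma sum_apply_eq_mul_of_unanimity {e : ℝ}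
    (hψ : ∀ R hR, ∑ i, ψ (unanimity R hR) i = e) (v : GameSpace Ω) :
    ∑ i, ψ v i = e * (v : Finset Ω → ℝ) Finset.univ := by
  have h : (∑ i, LinearMap.proj (R := ℝ) (φ := fun _ : Ω => ℝ) i).comp ψ =
      e • (LinearMap.proj Finset.univ).comp (GameSpace Ω).subtype :=
    (unanimityBasis Ω).ext fun R => by simp [hψ]
  simpa using LinearMap.congr_fun h v

lemma isGSym_of_unanimity {G : Subgroup (Equiv.Perm Ω)}
    (hψ : ∀ g ∈ G, ∀ R hR i,
      ψ (unanimity (R.image g) (hR.image g)) (g i) = ψ (unanimity R hR) i) :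
    IsGSym G ψ := by
  intro g hg v i
  have h : (LinearMap.proj i).comp
      (ψ.comp (gameComap _ (Finset.image_empty (g⁻¹ : Equiv.Perm Ω)))) =
      (LinearMap.proj (g⁻¹ i)).comp ψ :=
    (unanimityBasis Ω).ext fun R => by
      simp only [LinearMap.comp_apply, LinearMap.proj_apply, unanimityBasis_apply,
        ← permGame_eq_gameComap, permGame_unanimity]
      simpa using hψ g hg R.1 R.2 (g⁻¹ i)
  exact LinearMap.congr_fun h v

omit [Fintype Ω] in
lemma IsGSym.apply_unanimity_image {G : Subgroup (Equiv.Perm Ω)} (hψ : IsGSym G ψ)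
    {g : Equiv.Perm Ω} (hg : g ∈ G) (R : Finset Ω) (hR : R.Nonempty) (i : Ω) :
    ψ (unanimity (R.image g) (hR.image g)) (g i) = ψ (unanimity R hR) i := by
  simpa [permGame_unanimity] using hψ g hg (unanimity R hR) (g i)

end UnanimityCriteria

section Orbits

variable {Ω : Type*} [DecidableEq Ω] (G : Subgroup (Equiv.Perm Ω))

/-- A function `q` on `X/G` read as the payoff `q[(i, R)]` of each member `i` of a coalition `R`,
extended by zero to non-members. -/
noncomputable def orbitPayoff (q : Quotient (pairSetoid G) → ℝ) (R : Finset Ω) (i : Ω) : ℝ :=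
  if h : i ∈ R then q (Quotient.mk _ ⟨(i, R), h⟩) else 0

lemma orbitPayoff_image (q : Quotient (pairSetoid G) → ℝ) {g : Equiv.Perm Ω} (hg : g ∈ G)
    (R : Finset Ω) (i : Ω) : orbitPayoff G q (R.image g) (g i) = orbitPayoff G q R i := by
  by_cases hi : i ∈ R
  · rw [orbitPayoff, orbitPayoff, dif_pos (Finset.mem_image_of_mem g hi), dif_pos hi]
    exact congrArg q (Quotient.sound ⟨g⁻¹, inv_mem hg, by simp, by simp [Finset.image_image]⟩)
  · simp [orbitPayoff, hi]

lemma orbitPayoff_add (q q' : Quotient (pairSetoid G) → ℝ) (R : Finset Ω) (i : Ω) :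
    orbitPayoff G (q + q') R i = orbitPayoff G q R i + orbitPayoff G q' R i := by
  unfold orbitPayoff
  split_ifs <;> simp

lemma orbitPayoff_smul (c : ℝ) (q : Quotient (pairSetoid G) → ℝ) (R : Finset Ω) (i : Ω) :
    orbitPayoff G (c • q) R i = c * orbitPayoff G q R i := by
  unfold orbitPayoff
  split_ifs <;> simp

variable [Fintype Ω]

/-- The total payoff `∑_{i ∈ R} q[(i, R)]` of a coalition, as a function on `χ/G`. -/
noncomputable def coalitionSum :
    (Quotient (pairSetoid G) → ℝ) →ₗ[ℝ] (Quotient (chiSetoid G) → ℝ) where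
  toFun q := Quotient.lift (fun R => ∑ i, orbitPayoff G q R.1 i) (by
    rintro R S ⟨g, hg, hRS⟩
    rw [← hRS]
    exact (Fintype.sum_equiv g _ _ fun i => (orbitPayoff_image G q hg R.1 i).symm))
  map_add' q q' := by
    funext R
    induction R using Quotient.inductionOn
    simp [orbitPayoff_add, Finset.sum_add_distrib]
  map_smul' c q := by
    funext R
    induction R using Quotient.inductionOn
    simp [orbitPayoff_smul, Finset.mul_sum]

lemma coalitionSum_mk (q : Quotient (pairSetoid G) → ℝ) (R : NonemptyCoalition Ω) :
    coalitionSum G q (Quotient.mk _ R) = ∑ i, orbitPayoff G q R.1 i :=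
  rfl

/-- A preimage of `r` shares `r[R]` equally among the members of `R`. -/
lemma coalitionSum_surjective : Function.Surjective (coalitionSum G) := by
  intro r
  let share (x : {p : Ω × Finset Ω // p.1 ∈ p.2}) : ℝ :=
    r (Quotient.mk _ ⟨x.1.2, x.1.1, x.2⟩) / x.1.2.card
  have hshare : ∀ x y, (pairSetoid G).r x y → share x = share y := by
    rintro x y ⟨g, hg, -, hxy⟩
    have hcls : Quotient.mk (chiSetoid G) ⟨x.1.2, x.1.1, x.2⟩ =
        Quotient.mk _ ⟨y.1.2, y.1.1, y.2⟩ :=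
      Quotient.sound ⟨g, hg, hxy⟩
    simp only [share, hcls, ← hxy, Finset.card_image_of_injective _ g.injective]
  refine ⟨Quotient.lift share hshare, funext fun R => ?_⟩
  induction R using Quotient.inductionOn with | h R => ?_
  have hpayoff : ∀ i, orbitPayoff G (Quotient.lift share hshare) R.1 i =
      if i ∈ R.1 then r (Quotient.mk _ R) / R.1.card else 0 := by
    intro i
    unfold orbitPayoff
    split_ifs <;> rfl
  have hcard : (R.1.card : ℝ) ≠ 0 := by exact_mod_cast R.2.card_pos.ne'
  simp only [coalitionSum_mk, hpayoff, Finset.sum_ite_mem, Finset.univ_inter, Finset.sum_const,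
    nsmul_eq_mul]
  field_simp

end Orbits

section SymmetricQuasiValues

variable {Ω : Type*} [Fintype Ω] [DecidableEq Ω] (G : Subgroup (Equiv.Perm Ω))

noncomputable def profileValue (q : Quotient (pairSetoid G) → ℝ) : GameValue Ω :=
  (unanimityBasis Ω).constr ℝ fun R => orbitPayoff G q R.1

lemma profileValue_unanimity (q : Quotient (pairSetoid G) → ℝ) (R : Finset Ω)
    (hR : R.Nonempty) : profileValue G q (unanimity R hR) = orbitPayoff G q R := by
  rw [← unanimityBasis_apply ⟨R, hR⟩, profileValue, Module.Basis.constr_basis]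

lemma profileValue_apply_eq_zero_of_isNullPlayer (q : Quotient (pairSetoid G) → ℝ)
    {v : GameSpace Ω} {i : Ω} (hv : IsNullPlayer i v) : profileValue G q v i = 0 :=
  apply_eq_zero_of_isNullPlayer (fun R hR i hi => by
    simp [profileValue_unanimity, orbitPayoff, hi]) hv

lemma sum_profileValue {q : Quotient (pairSetoid G) → ℝ} {e : ℝ}
    (hq : coalitionSum G q = fun _ => e) (v : GameSpace Ω) :
    ∑ i, profileValue G q v i = e * (v : Finset Ω → ℝ) Finset.univ :=
  sum_apply_eq_mul_of_unanimity (fun R hR => by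
    simpa [profileValue_unanimity, coalitionSum_mk] using congrFun hq (Quotient.mk _ ⟨R, hR⟩)) v

lemma isGSym_profileValue (q : Quotient (pairSetoid G) → ℝ) : IsGSym G (profileValue G q) :=
  isGSym_of_unanimity fun g hg R hR i => by
    simp only [profileValue_unanimity, orbitPayoff_image G q hg]

lemma isQuasiValue_profileValue {q : Quotient (pairSetoid G) → ℝ}
    (hq : coalitionSum G q = fun _ => 1) : IsQuasiValue (profileValue G q) :=
  ⟨fun _ _ hv => profileValue_apply_eq_zero_of_isNullPlayer G q hv,
    fun v => by rw [sum_profileValue G hq, one_mul]⟩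

def symQuasiValueDirection : Submodule ℝ (GameValue Ω) where
  carrier := {ψ | (∀ v i, IsNullPlayer i v → ψ v i = 0) ∧ (∀ v, ∑ i, ψ v i = 0) ∧ IsGSym G ψ}
  add_mem' := by
    rintro ψ ψ' ⟨hn, hs, hg⟩ ⟨hn', hs', hg'⟩
    refine ⟨fun v i hv => ?_, fun v => ?_, fun g hgG v i => ?_⟩
    · simp [hn v i hv, hn' v i hv]
    · simp [Finset.sum_add_distrib, hs v, hs' v]
    · simp [hg g hgG, hg' g hgG]
  zero_mem' := ⟨fun _ _ _ => rfl, fun _ => by simp, fun _ _ _ _ => rfl⟩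
  smul_mem' := by
    rintro c ψ ⟨hn, hs, hg⟩
    refine ⟨fun v i hv => ?_, fun v => ?_, fun g hgG v i => ?_⟩
    · simp [hn v i hv]
    · simp [← Finset.mul_sum, hs v]
    · simp [hg g hgG]

lemma isQuasiValue_and_isGSym_iff_sub_mem {φ₀ : GameValue Ω}
    (hφ₀ : IsQuasiValue φ₀ ∧ IsGSym G φ₀) (φ : GameValue Ω) :
    IsQuasiValue φ ∧ IsGSym G φ ↔ φ - φ₀ ∈ symQuasiValueDirection G := by
  obtain ⟨⟨hn₀, he₀⟩, hg₀⟩ := hφ₀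
  constructor
  · rintro ⟨⟨hn, he⟩, hg⟩
    refine ⟨fun v i hv => ?_, fun v => ?_, fun g hgG v i => ?_⟩
    · simp [hn v i hv, hn₀ v i hv]
    · simp [Finset.sum_sub_distrib, he v, he₀ v]
    · simp [hg g hgG, hg₀ g hgG]
  · intro hψ
    obtain ⟨ψ, rfl⟩ : ∃ ψ, φ = ψ + φ₀ := ⟨φ - φ₀, by abel⟩
    rw [add_sub_cancel_right] at hψ
    obtain ⟨hn, hs, hg⟩ := hψ
    refine ⟨⟨fun v i hv => ?_, fun v => ?_⟩, fun g hgG v i => ?_⟩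
    · simp [hn v i hv, hn₀ v i hv]
    · simp [Finset.sum_add_distrib, hs v, he₀ v]
    · simp [hg g hgG, hg₀ g hgG]

end SymmetricQuasiValues

section Dimension

variable {Ω : Type*} [Fintype Ω] [DecidableEq Ω] (G : Subgroup (Equiv.Perm Ω))

/-- `ψ ↦ ((i, R) ↦ ψ(u_R)ᵢ)`, well defined on `X/G` by `G`-symmetry. -/
noncomputable def unanimityProfile :
    symQuasiValueDirection G →ₗ[ℝ] (Quotient (pairSetoid G) → ℝ) where
  toFun ψ := Quotient.lift (fun x => ψ.1 (unanimity x.1.2 ⟨x.1.1, x.2⟩) x.1.1) (by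
    rintro ⟨⟨i, R⟩, hi⟩ ⟨⟨j, S⟩, hj⟩ ⟨g, hg, hij, hRS⟩
    dsimp only at hij hRS ⊢
    subst hij hRS
    exact (ψ.2.2.2.apply_unanimity_image hg R ⟨i, hi⟩ i).symm)
  map_add' _ _ := by
    funext x
    induction x using Quotient.inductionOn
    rfl
  map_smul' _ _ := by
    funext x
    induction x using Quotient.inductionOn
    rfl

lemma orbitPayoff_unanimityProfile (ψ : symQuasiValueDirection G) (R : Finset Ω)
    (hR : R.Nonempty) : orbitPayoff G (unanimityProfile G ψ) R = ψ.1 (unanimity R hR) := by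
  funext i
  by_cases hi : i ∈ R
  · rw [orbitPayoff, dif_pos hi]
    rfl
  · rw [orbitPayoff, dif_neg hi, ψ.2.1 _ i (isNullPlayer_unanimity hR hi)]

lemma unanimityProfile_injective : Function.Injective (unanimityProfile G) := by
  refine (injective_iff_map_eq_zero _).2 fun ψ hψ => Subtype.ext ?_
  refine (unanimityBasis Ω).ext fun R => ?_
  rw [unanimityBasis_apply, ← orbitPayoff_unanimityProfile, hψ]
  funext i
  simp [orbitPayoff]

lemma range_unanimityProfile :
    LinearMap.range (unanimityProfile G) = LinearMap.ker (coalitionSum G) := by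
  ext q
  constructor
  · rintro ⟨ψ, rfl⟩
    refine LinearMap.mem_ker.2 (funext fun R => ?_)
    induction R using Quotient.inductionOn with | h R => ?_
    rw [coalitionSum_mk, orbitPayoff_unanimityProfile G ψ R.1 R.2]
    exact ψ.2.2.1 _
  · intro hq
    have hzero : coalitionSum G q = fun _ => 0 := LinearMap.mem_ker.1 hq
    refine ⟨⟨profileValue G q, fun _ _ hv => profileValue_apply_eq_zero_of_isNullPlayer G q hv,
      fun v => by rw [sum_profileValue G hzero, zero_mul], isGSym_profileValue G q⟩, ?_⟩
    funext x
    induction x using Quotient.inductionOn with | h x => ?_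
    obtain ⟨⟨i, R⟩, hi⟩ := x
    exact (congrFun (profileValue_unanimity G q R ⟨i, hi⟩) i).trans (dif_pos hi)

lemma finrank_symQuasiValueDirection :
    Module.finrank ℝ (symQuasiValueDirection G) =
      Nat.card (Quotient (pairSetoid G)) - Nat.card (Quotient (chiSetoid G)) := by
  have hpi : ∀ (ι : Type _) [Finite ι], Module.finrank ℝ (ι → ℝ) = Nat.card ι := fun ι _ => by
    have := Fintype.ofFinite ι
    rw [Module.finrank_pi, Nat.card_eq_fintype_card]
  have hrank := LinearMap.finrank_range_add_finrank_ker (coalitionSum G)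
  rw [LinearMap.range_eq_top.2 (coalitionSum_surjective G), finrank_top,
    ← range_unanimityProfile, LinearMap.finrank_range_of_inj (unanimityProfile_injective G), hpi, hpi] at hrank
  omega

end Dimension

/-- the dimension of the affine space `𝒜_G` of `G`-symmetric
quasi-values equals `|X/G| - |χ/G|`, where `X = {(i,R) : i ∈ R ⊆ Ω}` and
`χ = {R : ∅ ≠ R ⊆ Ω}` with the natural `G`-actions. -/
theorem stmt2 {Ω : Type*} [Fintype Ω] [DecidableEq Ω] (G : Subgroup (Equiv.Perm Ω)) :
    Module.finrank ℝ
        (affineSpan ℝ {φ : GameValue Ω | IsQuasiValue φ ∧ IsGSym G φ}).direction =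
      Nat.card (Quotient (pairSetoid G)) - Nat.card (Quotient (chiSetoid G)) := by
  obtain ⟨q₀, hq₀⟩ := coalitionSum_surjective G fun _ => 1
  have hφ₀ : IsQuasiValue (profileValue G q₀) ∧ IsGSym G (profileValue G q₀) :=
    ⟨isQuasiValue_profileValue G hq₀, isGSym_profileValue G q₀⟩
  have hset : {φ : GameValue Ω | IsQuasiValue φ ∧ IsGSym G φ} =
      AffineSubspace.mk' (profileValue G q₀) (symQuasiValueDirection G) := by
    ext φ
    rw [Set.mem_ofPred_eq, isQuasiValue_and_isGSym_iff_sub_mem G hφ₀, SetLike.mem_coe,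
      AffineSubspace.mem_mk', vsub_eq_sub]
  rw [hset, AffineSubspace.affineSpan_coe, AffineSubspace.direction_mk',
    finrank_symQuasiValueDirection]
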